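/- arXiv:0808.0377 — 2 statements merged into one kernel-verified Lean document; each statement's English description precedes it below -/
import Mathlib

section
/- Let $q \geq 5$ be an odd prime power and let $G$ be a group whose non-commuting graph is isomorphic (as a graph) to the non-commuting graph of the special linear group $\mathrm{SL}(2,q)$. Then $G$ is an AC-group. -/
/-!
A matrix commuting with a non-scalar `2 × 2` matrix `A` over a field is of the form `α + β A`,
so any two such matrices commute: centralizers of non-central elements of `SL(2, F)` are abelian
for every field `F`. Being an AC-group can be read off the non-commuting graph: the group is
non-abelian iff the graph has a vertex, and its centralizers of non-central elements are abelian
iff any two non-neighbours of a vertex are non-adjacent. Hence it transfers along graph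
isomorphisms.
-/

/-- The non-commuting graph of a group `G`: vertices are the non-central
elements of `G`, and two vertices are adjacent iff they do not commute. -/
def noncommutingGraph (G : Type*) [Group G] :
    SimpleGraph {x : G // x ∉ Subgroup.center G} where
  Adj a b := ¬ Commute (a : G) (b : G)
  symm := ⟨fun _ _ h hc => h hc.symm⟩
  loopless := ⟨fun a h => h (Commute.refl (a : G))⟩

/-- A non-abelian group is an AC-group if the centralizer of every
non-central element is abelian. -/
def IsACGroup (G : Type*) [Group G] : Prop :=
  (¬ ∀ x y : G, x * y = y * x) ∧
    ∀ x : G, x ∉ Subgroup.center G →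
      ∀ a ∈ Subgroup.centralizer {x}, ∀ b ∈ Subgroup.centralizer {x}, a * b = b * a

open Matrix Subgroup

section noncommutingGraph

variable {G H : Type*} [Group G] [Group H]

@[simp]
theorem noncommutingGraph_adj {a b : {x : G // x ∉ center G}} :
    (noncommutingGraph G).Adj a b ↔ ¬ Commute (a : G) b :=
  Iff.rfl

theorem isACGroup_iff_noncommutingGraph :
    IsACGroup G ↔ Nonempty {x : G // x ∉ center G} ∧
      ∀ x a b, ¬ (noncommutingGraph G).Adj x a → ¬ (noncommutingGraph G).Adj x b →
        ¬ (noncommutingGraph G).Adj a b := by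
  simp only [noncommutingGraph_adj, not_not]
  constructor
  · rintro ⟨hG, hAC⟩
    push Not at hG
    obtain ⟨x, y, hxy⟩ := hG
    refine ⟨⟨y, fun hy => hxy (mem_center_iff.1 hy x)⟩, fun x a b hxa hxb => ?_⟩
    exact hAC x x.2 a (mem_centralizer_singleton_iff.2 hxa.eq.symm) b
      (mem_centralizer_singleton_iff.2 hxb.eq.symm)
  · rintro ⟨⟨v⟩, hAC⟩
    refine ⟨fun hG => v.2 (mem_center_iff.2 fun g => hG g v), fun x hx a ha b hb => ?_⟩
    by_cases hac : a ∈ center G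
    · exact (mem_center_iff.1 hac b).symm
    by_cases hbc : b ∈ center G
    · exact mem_center_iff.1 hbc a
    exact (hAC ⟨x, hx⟩ ⟨a, hac⟩ ⟨b, hbc⟩ (mem_centralizer_singleton_iff.1 ha).symm
      (mem_centralizer_singleton_iff.1 hb).symm).eq

theorem IsACGroup.of_noncommutingGraph_iso (hH : IsACGroup H)
    (φ : noncommutingGraph G ≃g noncommutingGraph H) : IsACGroup G := by
  rw [isACGroup_iff_noncommutingGraph] at hH ⊢
  obtain ⟨⟨v⟩, hAC⟩ := hH
  refine ⟨⟨φ.symm v⟩, fun x a b hxa hxb => ?_⟩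
  rw [← φ.map_adj_iff] at hxa hxb ⊢
  exact hAC _ _ _ hxa hxb

end noncommutingGraph

theorem Matrix.exists_eq_smul_one_add_smul_of_commute_fin_two {K : Type*} [Field K]
    {A B : Matrix (Fin 2) (Fin 2) K} (hA : A ∉ Set.range (scalar (Fin 2))) (h : Commute A B) :
    ∃ α β : K, B = α • 1 + β • A := by
  obtain ⟨a, b, c, d, rfl⟩ : ∃ a b c d, A = !![a, b; c, d] := ⟨_, _, _, _, A.eta_fin_two⟩
  obtain ⟨p, q, r, s, rfl⟩ : ∃ p q r s, B = !![p, q; r, s] := ⟨_, _, _, _, B.eta_fin_two⟩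
  simp only [commute_iff_eq, mul_fin_two, EmbeddingLike.apply_eq_iff_eq, vecCons_inj, and_true]
    at h
  have hA' : ¬ (b = 0 ∧ c = 0 ∧ a = d) := by
    rintro ⟨rfl, rfl, rfl⟩
    exact hA ⟨a, by simp [← ext_iff, Fin.forall_fin_two]⟩
  simp only [smul_of, smul_cons, smul_eq_mul, smul_empty, ← ext_iff, Fin.forall_fin_two, of_apply,
    cons_val', cons_val_fin_one, cons_val_zero, cons_val_one, add_apply, smul_apply, one_apply_eq,
    one_apply_ne, zero_ne_one, one_ne_zero, ne_eq, not_false_eq_true, mul_one, mul_zero, zero_add]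
  obtain ⟨⟨h00, h01⟩, h10, -⟩ := h
  by_cases hb : b = 0
  · by_cases hc : c = 0
    · have had : a - d ≠ 0 := sub_ne_zero.2 fun had => hA' ⟨hb, hc, had⟩
      refine ⟨p - (p - s) / (a - d) * a, (p - s) / (a - d), ?_⟩
      field_simp
      grind
    · refine ⟨p - r / c * a, r / c, ?_⟩
      field_simp
      grind
  · refine ⟨p - q / b * a, q / b, ?_⟩
    field_simp
    grind

theorem Matrix.commute_of_commute_of_commute_fin_two {K : Type*} [Field K]
    {A B C : Matrix (Fin 2) (Fin 2) K} (hA : A ∉ Set.range (scalar (Fin 2)))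
    (hB : Commute A B) (hC : Commute A C) : Commute B C := by
  obtain ⟨α, β, rfl⟩ := exists_eq_smul_one_add_smul_of_commute_fin_two hA hB
  obtain ⟨γ, δ, rfl⟩ := exists_eq_smul_one_add_smul_of_commute_fin_two hA hC
  apply_rules [Commute.add_left, Commute.add_right, Commute.smul_left, Commute.smul_right,
    Commute.one_left, Commute.one_right, Commute.refl]

namespace Matrix.SpecialLinearGroup

variable {n R : Type*} [Fintype n] [DecidableEq n] [CommRing R]

theorem mem_center_iff_coe_mem_range_scalar {A : SpecialLinearGroup n R} :
    A ∈ center (SpecialLinearGroup n R) ↔ (A : Matrix n n R) ∈ Set.range (scalar n) := by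
  rw [mem_center_iff]
  refine ⟨fun ⟨r, _, hr⟩ => ⟨r, hr⟩, fun ⟨r, hr⟩ => ⟨r, ?_, hr⟩⟩
  simpa [← hr] using A.2

theorem commute_iff_commute_coe {A B : SpecialLinearGroup n R} :
    Commute A B ↔ Commute (A : Matrix n n R) B := by
  rw [commute_iff_eq, commute_iff_eq, ← coe_mul, ← coe_mul]
  exact Subtype.val_injective.eq_iff.symm

end Matrix.SpecialLinearGroup

theorem isACGroup_specialLinearGroup_fin_two (K : Type*) [Field K] :
    IsACGroup (SpecialLinearGroup (Fin 2) K) := by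
  constructor
  · intro hcomm
    obtain ⟨r, hr⟩ := SpecialLinearGroup.mem_center_iff_coe_mem_range_scalar.1
      (Subgroup.mem_center_iff.2 fun g => hcomm g ⟨!![1, 1; 0, 1], by simp [det_fin_two_of]⟩)
    simpa using congrFun₂ hr 0 1
  · intro x hx a ha b hb
    rw [SpecialLinearGroup.mem_center_iff_coe_mem_range_scalar] at hx
    rw [mem_centralizer_singleton_iff, ← commute_iff_eq,
      SpecialLinearGroup.commute_iff_commute_coe] at ha hb
    rw [← commute_iff_eq, SpecialLinearGroup.commute_iff_commute_coe]
    exact commute_of_commute_of_commute_fin_two hx ha.symm hb.symm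

theorem isACGroup_of_noncommuting_graph_iso_sl_general
    (F : Type*) [Field F]
    (G : Type*) [Group G]
    (φ : noncommutingGraph G ≃g
      noncommutingGraph (Matrix.SpecialLinearGroup (Fin 2) F)) :
    IsACGroup G :=
  (isACGroup_specialLinearGroup_fin_two F).of_noncommutingGraph_iso φ

theorem isACGroup_of_noncommuting_graph_iso_sl
    (q : ℕ) (hq : IsPrimePow q) (hq5 : 5 ≤ q) (hqo : Odd q)
    (F : Type*) [Field F] [Fintype F] (hF : Fintype.card F = q)
    (G : Type*) [Group G]
    (φ : noncommutingGraph G ≃g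
      noncommutingGraph (Matrix.SpecialLinearGroup (Fin 2) F)) :
    IsACGroup G :=
  isACGroup_of_noncommuting_graph_iso_sl_general F G φ
end

section
/- Let $q \geq 5$ be an odd prime power and let $G$ be a group whose non-commuting graph is isomorphic (as a graph) to the non-commuting graph of the special linear group $\mathrm{SL}(2,q)$. Then $G$ is not nilpotent. -/
namespace Matrix

variable {F : Type*} [Field F]

theorem exists_eq_smul_one_add_smul_of_commute {X Y : Matrix (Fin 2) (Fin 2) F}
    (hX : ∀ a : F, scalar (Fin 2) a ≠ X) (h : Commute X Y) :
    ∃ a b : F, Y = a • 1 + b • X := by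
  -- `X` and `Y` are determined up to a scalar by these vectors, whose cross product
  -- collects the entries of `X * Y - Y * X`.
  set v : Fin 3 → F := ![X 0 1, X 1 0, X 0 0 - X 1 1]
  set w : Fin 3 → F := ![Y 0 1, Y 1 0, Y 0 0 - Y 1 1]
  have hv : v ≠ 0 := by
    intro hv0
    apply hX (X 0 0)
    have h0 := congrFun hv0 0
    have h1 := congrFun hv0 1
    have h2 := congrFun hv0 2
    simp [v] at h0 h1 h2
    ext i j
    fin_cases i <;> fin_cases j <;> simp [h0, h1]
    linear_combination h2
  have hvw : crossProduct v w = 0 := by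
    have hXY := Matrix.ext_iff.mpr h
    have e00 := hXY 0 0
    have e01 := hXY 0 1
    have e10 := hXY 1 0
    simp only [mul_apply, Fin.sum_univ_two] at e00 e01 e10
    ext i
    fin_cases i <;> simp [v, w, cross_apply]
    · linear_combination e10
    · linear_combination e01
    · linear_combination e00
  obtain ⟨b, hb⟩ : ∃ b : F, b • v = w := by
    by_contra! hne
    exact crossProduct_ne_zero_iff_linearIndependent.mpr
      ((LinearIndependent.pair_iff' hv).mpr hne) hvw
  have h0 := congrFun hb 0
  have h1 := congrFun hb 1
  have h2 := congrFun hb 2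
  simp [v, w] at h0 h1 h2
  refine ⟨Y 0 0 - b * X 0 0, b, ?_⟩
  ext i j
  fin_cases i <;> fin_cases j <;> simp [← h0, ← h1]
  linear_combination h2

end Matrix

open Matrix MatrixGroups Subgroup

namespace Matrix.SpecialLinearGroup

variable {F : Type*} [Field F]

theorem eq_or_eq_neg_inv_of_sub_eq_scalar {y z : SL(2, F)} {s : F}
    (h : (z : Matrix (Fin 2) (Fin 2) F) - y = scalar (Fin 2) s) : z = y ∨ z = -y⁻¹ := by
  -- `det (y + s) = 1 + s tr y + s²`, so `s = 0` or `s = -tr y`, and `y - tr y = -adj y`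
  have hz : ∀ i j, z i j = y i j + scalar (Fin 2) s i j := fun i j => by
    rw [← h, sub_apply, add_sub_cancel]
  have hdet := z.det_coe
  have hdety := y.det_coe
  rw [det_fin_two] at hdet hdety
  simp [hz] at hdet
  have hs : s * (s + (y 0 0 + y 1 1)) = 0 := by linear_combination hdet - hdety
  rcases mul_eq_zero.mp hs with hs | hs
  · left
    ext i j
    simp [hz, hs]
  · right
    ext i j
    fin_cases i <;> fin_cases j <;> simp [hz, adjugate_fin_two] <;> linear_combination hs

theorem card_center_eq_two (hF : ringChar F ≠ 2) : Nat.card (center SL(2, F)) = 2 := by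
  rw [Nat.card_congr (center_equiv_rootsOfUnity' 0).toEquiv, Fintype.card_fin]
  exact (IsPrimitiveRoot.neg_one (ringChar F) hF).card_rootsOfUnity

theorem scalar_ne_of_notMem_center {n : Type*} [Fintype n] [DecidableEq n] {R : Type*}
    [CommRing R] {x : SpecialLinearGroup n R} (hx : x ∉ center (SpecialLinearGroup n R))
    (a : R) : scalar n a ≠ x := by
  intro h
  refine hx (mem_center_iff.mpr ⟨a, ?_, h⟩)
  simpa [← h] using x.det_coe

theorem mem_centralizer_iff_commute_coe {x y : SL(2, F)} :
    y ∈ centralizer {x} ↔ Commute (x : Matrix (Fin 2) (Fin 2) F) y := by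
  rw [mem_centralizer_singleton_iff, commute_iff_eq, ← coe_mul, ← coe_mul, eq_comm]
  exact Subtype.ext_iff

/-- Modulo scalars, the centralizer of a non-central `x` lies on the line through `x`, and each
coset of the scalars meets `SL(2, F)` in at most two points. -/
theorem card_centralizer_le [Fintype F] {x : SL(2, F)} (hx : x ∉ center SL(2, F)) :
    Nat.card (centralizer {x}) ≤ 2 * Fintype.card F := by
  classical
  let f : SL(2, F) → Matrix (Fin 2) (Fin 2) F := fun y => y - scalar (Fin 2) (y 0 0)
  let M : Matrix (Fin 2) (Fin 2) F := x - scalar (Fin 2) (x 0 0)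
  have hmaps : ∀ y ∈ (centralizer {x} : Set SL(2, F)).toFinset,
      f y ∈ Finset.univ.image fun b : F => b • M := by
    intro y hy
    obtain ⟨a, b, hab⟩ := exists_eq_smul_one_add_smul_of_commute (scalar_ne_of_notMem_center hx)
      (mem_centralizer_iff_commute_coe.mp (Set.mem_toFinset.mp hy))
    refine Finset.mem_image.mpr ⟨b, Finset.mem_univ _, ?_⟩
    ext i j
    fin_cases i <;> fin_cases j <;> simp [f, M, hab]
    ring
  have hfiber : ∀ m ∈ Finset.univ.image fun b : F => b • M,
      ((centralizer {x} : Set SL(2, F)).toFinset.filter fun y => f y = m).card ≤ 2 := by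
    intro m _
    rcases Finset.eq_empty_or_nonempty
      ((centralizer {x} : Set SL(2, F)).toFinset.filter fun y => f y = m) with he | ⟨y, hy⟩
    · simp [he]
    refine (Finset.card_le_card (t := {y, -y⁻¹}) fun z hz => ?_).trans Finset.card_le_two
    have hfz : f z = f y := (Finset.mem_filter.mp hz).2.trans (Finset.mem_filter.mp hy).2.symm
    have hsub : (z : Matrix (Fin 2) (Fin 2) F) - y = scalar (Fin 2) (z 0 0 - y 0 0) := by
      rw [map_sub]
      exact sub_eq_sub_iff_sub_eq_sub.mp hfz
    simpa using eq_or_eq_neg_inv_of_sub_eq_scalar hsub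
  calc Nat.card (centralizer {x})
      = ((centralizer {x} : Set SL(2, F)).toFinset).card := by
        rw [Set.toFinset_card, ← Nat.card_eq_fintype_card]; rfl
    _ ≤ 2 * (Finset.univ.image fun b : F => b • M).card :=
        Finset.card_le_mul_card_image_of_maps_to hmaps 2 hfiber
    _ ≤ 2 * Fintype.card F := Nat.mul_le_mul_left 2 Finset.card_image_le

def unipotent (b : F) : SL(2, F) := ⟨!![1, b; 0, 1], by simp⟩

def diagonalUnit (μ : Fˣ) : SL(2, F) := ⟨!![(μ : F), 0; 0, (μ⁻¹ : Fˣ)], by simp⟩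

theorem diagonalUnit_injective : Function.Injective (diagonalUnit (F := F)) := by
  intro μ ν h
  have h00 := congrArg (fun y : SL(2, F) => y 0 0) h
  simpa [diagonalUnit, Units.ext_iff] using h00

theorem val_sub_val_inv_ne_zero {μ : Fˣ} (hμ : μ ∉ rootsOfUnity 2 F) :
    (μ : F) - (μ : F)⁻¹ ≠ 0 := by
  intro h
  refine hμ ((mem_rootsOfUnity 2 μ).mpr (Units.ext ?_))
  rw [Units.val_pow_eq_pow_val, Units.val_one, sq]
  nth_rewrite 2 [sub_eq_zero.mp h]
  exact mul_inv_cancel₀ μ.ne_zero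

theorem centralizer_diagonalUnit {μ : Fˣ} (hμ : μ ∉ rootsOfUnity 2 F) :
    (centralizer {diagonalUnit μ} : Set SL(2, F)) = Set.range diagonalUnit := by
  have hμ' := val_sub_val_inv_ne_zero hμ
  ext y
  rw [SetLike.mem_coe, mem_centralizer_iff_commute_coe, commute_iff_eq, diagonalUnit,
    eta_fin_two (y : Matrix _ _ F)]
  simp
  constructor
  · rintro ⟨⟨-, h01⟩, h10, -⟩
    have hy01 : y 0 1 = 0 := (mul_eq_zero.mp
      (by linear_combination h01 : y 0 1 * ((μ : F) - (μ : F)⁻¹) = 0)).resolve_right hμ'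
    have hy10 : y 1 0 = 0 := (mul_eq_zero.mp
      (by linear_combination -h10 : y 1 0 * ((μ : F) - (μ : F)⁻¹) = 0)).resolve_right hμ'
    have hdet : y 0 0 * y 1 1 = 1 := by
      have := y.det_coe
      rwa [det_fin_two, hy01, zero_mul, sub_zero] at this
    refine ⟨Units.mkOfMulEqOne _ _ hdet, ?_⟩
    ext i j
    fin_cases i <;> fin_cases j <;>
      simp [diagonalUnit, hy01, hy10, eq_inv_of_mul_eq_one_right hdet]
  · rintro ⟨ν, rfl⟩
    simp [diagonalUnit, mul_comm]

def scalarUnipotent (ζ : rootsOfUnity 2 F) (c : F) : SL(2, F) :=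
  ⟨!![((ζ : Fˣ) : F), c; 0, ((ζ : Fˣ) : F)], by
    simpa [sq] using congrArg Units.val ((mem_rootsOfUnity 2 (ζ : Fˣ)).mp ζ.2)⟩

theorem scalarUnipotent_injective :
    Function.Injective (Function.uncurry (scalarUnipotent (F := F))) := by
  rintro ⟨ζ, c⟩ ⟨η, d⟩ h
  have h00 := congrArg (fun y : SL(2, F) => y 0 0) h
  have h01 := congrArg (fun y : SL(2, F) => y 0 1) h
  simp [scalarUnipotent] at h00 h01
  exact Prod.ext (Subtype.ext (Units.ext h00)) h01

theorem centralizer_unipotent {b : F} (hb : b ≠ 0) :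
    (centralizer {unipotent b} : Set SL(2, F)) =
      Set.range (Function.uncurry (scalarUnipotent (F := F))) := by
  ext y
  rw [SetLike.mem_coe, mem_centralizer_iff_commute_coe, commute_iff_eq]
  constructor
  · intro h
    have h00 := congrFun (congrFun h 0) 0
    have h01 := congrFun (congrFun h 0) 1
    simp [unipotent, mul_apply] at h00 h01
    have hy10 : y 1 0 = 0 := h00.resolve_left hb
    have hy11 : y 1 1 = y 0 0 :=
      mul_left_cancel₀ hb (by linear_combination h01)
    have hdet : y 0 0 ^ 2 = 1 := by
      have := y.det_coe
      rwa [det_fin_two, hy10, hy11, mul_zero, sub_zero, ← sq] at this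
    refine ⟨(rootsOfUnity.mkOfPowEq (y 0 0) hdet, y 0 1), ?_⟩
    ext i j
    fin_cases i <;> fin_cases j <;> simp [scalarUnipotent, hy10, hy11]
  · rintro ⟨⟨ζ, c⟩, rfl⟩
    ext i j
    fin_cases i <;> fin_cases j <;> simp [unipotent, scalarUnipotent, mul_comm, add_comm]

theorem unipotent_notMem_center {b : F} (hb : b ≠ 0) : unipotent b ∉ center SL(2, F) := by
  intro h
  obtain ⟨r, -, hr⟩ := mem_center_iff.mp h
  simpa [unipotent, eq_comm, hb] using congrFun (congrFun hr 0) 1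

theorem diagonalUnit_notMem_center {μ : Fˣ} (hμ : μ ∉ rootsOfUnity 2 F) :
    diagonalUnit μ ∉ center SL(2, F) := by
  intro h
  obtain ⟨r, -, hr⟩ := mem_center_iff.mp h
  have h00 := congrFun (congrFun hr 0) 0
  have h11 := congrFun (congrFun hr 1) 1
  simp [diagonalUnit] at h00 h11
  exact val_sub_val_inv_ne_zero hμ (by rw [← h11, ← h00, sub_self])

variable [Fintype F]

theorem card_centralizer_unipotent (hF : ringChar F ≠ 2) {b : F} (hb : b ≠ 0) :
    Nat.card (centralizer {unipotent b}) = 2 * Fintype.card F := by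
  rw [← SetLike.coe_sort_coe, centralizer_unipotent hb,
    Nat.card_range_of_injective scalarUnipotent_injective, Nat.card_prod,
    (IsPrimitiveRoot.neg_one (ringChar F) hF).card_rootsOfUnity, Nat.card_eq_fintype_card]

theorem card_centralizer_diagonalUnit {μ : Fˣ} (hμ : μ ∉ rootsOfUnity 2 F) :
    Nat.card (centralizer {diagonalUnit μ}) = Fintype.card F - 1 := by
  rw [← SetLike.coe_sort_coe, centralizer_diagonalUnit hμ,
    Nat.card_range_of_injective diagonalUnit_injective, Nat.card_units, Nat.card_eq_fintype_card]

theorem card_le_card_SL2 :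
    (Fintype.card F - 1) * Fintype.card F ^ 2 ≤ Nat.card SL(2, F) := by
  let g : Fˣ × F × F → SL(2, F) := fun p =>
    ⟨!![p.2.1, (p.2.1 * p.2.2 - 1) / p.1; p.1, p.2.2], by
      rw [det_fin_two_of]
      field_simp
      ring⟩
  have hg : Function.Injective g := by
    rintro ⟨c, a, d⟩ ⟨c', a', d'⟩ h
    have h00 := congrFun (congrFun (congrArg Subtype.val h) 0) 0
    have h10 := congrFun (congrFun (congrArg Subtype.val h) 1) 0
    have h11 := congrFun (congrFun (congrArg Subtype.val h) 1) 1
    simp only [g, of_apply, cons_val', cons_val_zero, cons_val_one, empty_val',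
      cons_val_fin_one] at h00 h10 h11
    simp [Units.ext h10, h00, h11]
  calc (Fintype.card F - 1) * Fintype.card F ^ 2 = Nat.card (Fˣ × F × F) := by
        rw [Nat.card_prod, Nat.card_prod, Nat.card_units, Nat.card_eq_fintype_card, sq]
    _ ≤ Nat.card SL(2, F) := Nat.card_le_card_of_injective g hg

end Matrix.SpecialLinearGroup

theorem exists_notMem_rootsOfUnity_two {F : Type*} [Field F] [Fintype F]
    (hF : 3 < Fintype.card F) : ∃ μ : Fˣ, μ ∉ rootsOfUnity 2 F := by
  by_contra! h
  have hle := Nat.card_le_card_of_injective (fun μ : Fˣ => (⟨μ, h μ⟩ : rootsOfUnity 2 F))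
    fun μ ν hμν => congrArg Subtype.val hμν
  rw [Nat.card_units, Nat.card_eq_fintype_card] at hle
  have := card_rootsOfUnity F 2
  omega

theorem SimpleGraph.Iso.card_not_adj {V W : Type*} {A : SimpleGraph V} {B : SimpleGraph W}
    (φ : A ≃g B) (v : V) :
    Nat.card {w // ¬ B.Adj (φ v) w} = Nat.card {w // ¬ A.Adj v w} :=
  (Nat.card_congr (φ.toEquiv.subtypeEquiv fun _ => not_congr φ.map_adj_iff.symm)).symm

open scoped commutatorElement

namespace Subgroup

variable {G : Type*} [Group G]

theorem card_eq_card_center_add_card_compl [Finite G] :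
    Nat.card G = Nat.card (center G) + Nat.card {x : G // x ∉ center G} := by
  classical
  rw [← Nat.card_sum]
  exact Nat.card_congr (Equiv.sumCompl (· ∈ center G)).symm

theorem finite_of_finite_compl_center [Finite {x : G // x ∉ center G}] {x : G}
    (hx : x ∉ center G) : Finite G := by
  classical
  have : Finite (center G) := Finite.of_injective
    (fun z : center G => (⟨x * z, fun h => hx (by simpa using mul_mem h (inv_mem z.2))⟩ :
      {x : G // x ∉ center G}))
    fun z z' h => Subtype.ext (mul_left_cancel (congrArg Subtype.val h))
  exact Finite.of_equiv _ (Equiv.sumCompl (· ∈ center G))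

theorem card_centralizer_eq_card_center_add [Finite G] (v : {x : G // x ∉ center G}) :
    Nat.card (centralizer {(v : G)}) =
      Nat.card (center G) + Nat.card {w // ¬ (noncommutingGraph G).Adj v w} := by
  classical
  have hcentral : Nat.card {y : centralizer {(v : G)} // (y : G) ∈ center G} =
      Nat.card (center G) :=
    Nat.card_congr (Equiv.subtypeSubtypeEquivSubtype fun hy => center_le_centralizer _ hy)
  have hnoncentral : Nat.card {y : centralizer {(v : G)} // (y : G) ∉ center G} =
      Nat.card {w // ¬ (noncommutingGraph G).Adj v w} := by
    refine Nat.card_congr ((Equiv.subtypeSubtypeEquivSubtypeInter (· ∈ centralizer {(v : G)})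
      (· ∉ center G)).trans (.trans (Equiv.subtypeEquivRight fun y => ?_)
        (Equiv.subtypeSubtypeEquivSubtypeInter (· ∉ center G)
          fun y => ¬ ¬ Commute (v : G) y).symm))
    rw [and_comm, mem_centralizer_singleton_iff, not_not, commute_iff_eq, eq_comm]
  rw [← hcentral, ← hnoncentral, ← Nat.card_sum]
  exact Nat.card_congr (Equiv.sumCompl _).symm

theorem card_centralizer_add_card_center_eq {H : Type*} [Group H] [Finite G] [Finite H]
    (φ : noncommutingGraph G ≃g noncommutingGraph H) (v : {x : G // x ∉ center G}) :
    Nat.card (centralizer {(v : G)}) + Nat.card (center H) =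
      Nat.card (centralizer {(φ v : H)}) + Nat.card (center G) := by
  rw [card_centralizer_eq_card_center_add, card_centralizer_eq_card_center_add, φ.card_not_adj]
  ring

theorem exists_mem_upperCentralSeries_two_notMem_center [Group.IsNilpotent G] {x : G}
    (hx : x ∉ center G) : ∃ t ∈ upperCentralSeries G 2, t ∉ center G := by
  by_contra! h
  have h12 : upperCentralSeries G 1 = upperCentralSeries G 2 :=
    le_antisymm (upperCentralSeries_mono G one_le_two)
      fun t ht => (upperCentralSeries_one G).symm ▸ h t ht
  have := upperCentralSeries.eq_top (by norm_num) h12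
  rw [upperCentralSeries_one] at this
  exact hx (this ▸ mem_top x)

theorem commutatorElement_mem_center {t : G} (ht : t ∈ upperCentralSeries G 2) (g : G) :
    ⁅t, g⁆ ∈ center G := by
  rw [← upperCentralSeries_one, commutatorElement_def]
  exact mem_upperCentralSeries_succ_iff.mp ht g

def commutatorHomToCenter {t : G} (ht : t ∈ upperCentralSeries G 2) : G →* center G where
  toFun g := ⟨⁅t, g⁆, commutatorElement_mem_center ht g⟩
  map_one' := Subtype.ext (commutatorElement_one_right t)
  map_mul' g h := Subtype.ext <| by
    -- `⁅t, g h⁆ = ⁅t, g⁆ (g ⁅t, h⁆ g⁻¹)`, and `⁅t, h⁆` is central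
    have hc := mem_center_iff.mp (commutatorElement_mem_center ht h) g⁻¹
    simp only [commutatorElement_def, Subgroup.coe_mul] at hc ⊢
    calc t * (g * h) * t⁻¹ * (g * h)⁻¹
        = t * g * t⁻¹ * ((t * h * t⁻¹ * h⁻¹) * g⁻¹) := by group
      _ = t * g * t⁻¹ * g⁻¹ * (t * h * t⁻¹ * h⁻¹) := by rw [← hc]; group

theorem ker_commutatorHomToCenter {t : G} (ht : t ∈ upperCentralSeries G 2) :
    (commutatorHomToCenter ht).ker = centralizer {t} := by
  ext g
  rw [MonoidHom.mem_ker, mem_centralizer_singleton_iff, ← Subtype.val_inj]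
  exact commutatorElement_eq_one_iff_mul_comm.trans eq_comm

theorem card_le_card_centralizer_mul_card_center [Finite G] {t : G}
    (ht : t ∈ upperCentralSeries G 2) :
    Nat.card G ≤ Nat.card (centralizer {t}) * Nat.card (center G) := by
  rw [← (centralizer {t}).card_mul_index, ← ker_commutatorHomToCenter ht, index_ker]
  exact Nat.mul_le_mul_left _ (card_le_card_group (commutatorHomToCenter ht).range)

end Subgroup

section IsoSL2

open Subgroup Matrix.SpecialLinearGroup

variable {F : Type*} [Field F] [Fintype F] {G : Type*} [Group G] [Finite G]

/-- `|C(u)| + |Z(G)| = 2 |C(d)| + 4` for the preimages `u`, `d` of a transvection and of a split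
diagonal element, and `|Z(G)|` divides both centralizer orders. -/
theorem card_center_dvd_four_of_iso_SL2 (φ : noncommutingGraph G ≃g noncommutingGraph SL(2, F))
    (hF : ringChar F ≠ 2) (hF3 : 3 < Fintype.card F) : Nat.card (center G) ∣ 4 := by
  obtain ⟨μ, hμ⟩ := exists_notMem_rootsOfUnity_two hF3
  set u := φ.symm ⟨_, unipotent_notMem_center (F := F) one_ne_zero⟩
  set d := φ.symm ⟨_, diagonalUnit_notMem_center hμ⟩
  have hu := card_centralizer_add_card_center_eq φ u
  have hd := card_centralizer_add_card_center_eq φ d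
  rw [φ.apply_symm_apply, card_centralizer_unipotent hF one_ne_zero, card_center_eq_two hF] at hu
  rw [φ.apply_symm_apply, card_centralizer_diagonalUnit hμ, card_center_eq_two hF] at hd
  have hdvd : ∀ x : G, Nat.card (center G) ∣ Nat.card (centralizer {x}) :=
    fun x => card_dvd_of_le (center_le_centralizer _)
  refine (Nat.dvd_add_right (dvd_mul_of_dvd_right (hdvd d) 2)).mp ?_
  rw [show 2 * Nat.card (centralizer {(d : G)}) + 4 =
    Nat.card (centralizer {(u : G)}) + Nat.card (center G) by omega]
  exact dvd_add (hdvd u) dvd_rfl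

theorem card_le_of_iso_SL2 [Group.IsNilpotent G]
    (φ : noncommutingGraph G ≃g noncommutingGraph SL(2, F)) (hF : ringChar F ≠ 2)
    (hF3 : 3 < Fintype.card F) : Nat.card G ≤ 8 * Fintype.card F + 8 := by
  obtain ⟨t, ht2, htZ⟩ := exists_mem_upperCentralSeries_two_notMem_center
    (φ.symm ⟨_, unipotent_notMem_center (F := F) one_ne_zero⟩).2
  have ht : Nat.card (centralizer {t}) + 2 = _ := card_center_eq_two hF ▸
    card_centralizer_add_card_center_eq φ ⟨t, htZ⟩
  have htS := card_centralizer_le (φ ⟨t, htZ⟩).2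
  have hm := Nat.le_of_dvd four_pos (card_center_dvd_four_of_iso_SL2 φ hF hF3)
  calc Nat.card G ≤ Nat.card (centralizer {t}) * Nat.card (center G) :=
        card_le_card_centralizer_mul_card_center ht2
    _ ≤ (2 * Fintype.card F + 2) * 4 := Nat.mul_le_mul (by omega) hm
    _ = 8 * Fintype.card F + 8 := by ring

theorem card_SL2_le_of_iso (φ : noncommutingGraph G ≃g noncommutingGraph SL(2, F)) :
    Nat.card SL(2, F) ≤ Nat.card G + 2 := by
  have hZ : Nat.card (center SL(2, F)) ≤ 2 :=
    (Nat.card_congr (center_equiv_rootsOfUnity' 0).toEquiv).trans_le (card_rootsOfUnity F _)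
  rw [card_eq_card_center_add_card_compl (G := G), card_eq_card_center_add_card_compl,
    Nat.card_congr φ.toEquiv]
  omega

end IsoSL2

theorem not_nilpotent_of_noncommuting_graph_iso_sl_general
    (q : ℕ) (hq5 : 5 ≤ q) (hqo : Odd q)
    (F : Type*) [Field F] [Fintype F] (hF : Fintype.card F = q)
    (G : Type*) [Group G]
    (φ : noncommutingGraph G ≃g
      noncommutingGraph (Matrix.SpecialLinearGroup (Fin 2) F)) :
    ¬ Group.IsNilpotent G := by
  intro hnil
  have hchar : ringChar F ≠ 2 := by
    rw [Ne, FiniteField.even_card_iff_char_two, hF, Nat.odd_iff.mp hqo]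
    exact one_ne_zero
  have : Finite {x : G // x ∉ center G} := Finite.of_equiv _ φ.toEquiv.symm
  have : Finite G := finite_of_finite_compl_center
    (φ.symm ⟨_, SpecialLinearGroup.unipotent_notMem_center (F := F) one_ne_zero⟩).2
  have hSG := card_SL2_le_of_iso φ
  have hGle := card_le_of_iso_SL2 φ hchar (by omega)
  have hS := SpecialLinearGroup.card_le_card_SL2 (F := F)
  rw [hF] at hS hGle
  have : 4 ≤ q - 1 := by omega
  nlinarith

theorem not_nilpotent_of_noncommuting_graph_iso_sl
    (q : ℕ) (hq : IsPrimePow q) (hq5 : 5 ≤ q) (hqo : Odd q)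
    (F : Type*) [Field F] [Fintype F] (hF : Fintype.card F = q)
    (G : Type*) [Group G]
    (φ : noncommutingGraph G ≃g
      noncommutingGraph (Matrix.SpecialLinearGroup (Fin 2) F)) :
    ¬ Group.IsNilpotent G :=
  not_nilpotent_of_noncommuting_graph_iso_sl_general q hq5 hqo F hF G φ
end
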